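/- arXiv:2111.05213 — 2 statements merged into one kernel-verified Lean document; each statement's English description precedes it below -/
import Mathlib

section
/- There exists a constant C > 0 such that for all x, y ∈ ℝ, |a''(x) − a''(y)| ≤ C |a(x) − a(y)|. -/
/-!
With `f = (1 + ψ)^(-(1+ε)) = a'`: for `|y| > 1` we have `f y = (1 + |y|)^(-(1+ε))`, so
`f'' = (1+ε)(2+ε) (1 + |y|)^(-(3+ε)) ≤ (1+ε)(2+ε) f`, and on a compact interval `f'' / f` is
bounded because `f > 0`. Hence `|a'''| = |f''| ≤ K a'`, so both `K a - a''` and `K a + a''` are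
monotone, which is the claim.
-/

open MeasureTheory Set Real Filter Topology

theorem IsCompact.exists_abs_le_mul_of_pos {X : Type*} [TopologicalSpace X] {s : Set X}
    (hs : IsCompact s) {g f : X → ℝ} (hg : ContinuousOn g s) (hf : ContinuousOn f s)
    (hf0 : ∀ x ∈ s, 0 < f x) : ∃ K > 0, ∀ x ∈ s, |g x| ≤ K * f x := by
  obtain ⟨M, hM⟩ := hs.exists_bound_of_continuousOn (hg.div hf fun x hx => (hf0 x hx).ne')
  refine ⟨max M 1, by positivity, fun x hx => ?_⟩
  have hgf : |g x| / f x ≤ M := by simpa [abs_div, abs_of_pos (hf0 x hx)] using hM x hx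
  rw [div_le_iff₀ (hf0 x hx)] at hgf
  exact hgf.trans (mul_le_mul_of_nonneg_right (le_max_left _ _) (hf0 x hx).le)

theorem abs_sub_le_mul_abs_sub_of_abs_deriv_le {F A F' A' : ℝ → ℝ} {K : ℝ} (hK : 0 ≤ K)
    (hF : ∀ t, HasDerivAt F (F' t) t) (hA : ∀ t, HasDerivAt A (A' t) t)
    (hle : ∀ t, |F' t| ≤ K * A' t) (x y : ℝ) : |F x - F y| ≤ K * |A x - A y| := by
  wlog hyx : y ≤ x generalizing x y
  · rw [abs_sub_comm, abs_sub_comm (A x)]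
    exact this y x (le_of_not_ge hyx)
  have hsub : Monotone fun t => K * A t - F t :=
    monotone_of_hasDerivAt_nonneg (fun t => ((hA t).const_mul K).sub (hF t))
      fun t => show 0 ≤ K * A' t - F' t from sub_nonneg.2 ((le_abs_self _).trans (hle t))
  have hadd : Monotone fun t => K * A t + F t :=
    monotone_of_hasDerivAt_nonneg (fun t => ((hA t).const_mul K).add (hF t))
      fun t => show 0 ≤ K * A' t + F' t by linarith [neg_abs_le (F' t), hle t]
  have h1 := hsub hyx
  have h2 := hadd hyx
  simp only at h1 h2
  calc |F x - F y| ≤ K * (A x - A y) := abs_sub_le_iff.2 ⟨by linarith, by linarith⟩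
    _ ≤ K * |A x - A y| := mul_le_mul_of_nonneg_left (le_abs_self _) hK

theorem integrable_rpow_neg_of_mul_one_add_abs_le {φ : ℝ → ℝ} {r c : ℝ} (hr : 1 < r)
    (hc : 0 < c) (hφ : Measurable φ) (hle : ∀ y, c * (1 + |y|) ≤ φ y) :
    Integrable fun y => φ y ^ (-r) := by
  have hdom : Integrable fun y : ℝ => c ^ (-r) * (1 + ‖y‖) ^ (-r) :=
    (integrable_one_add_norm (by simpa using hr)).const_mul _
  refine hdom.mono' (hφ.pow_const _).aestronglyMeasurable (Eventually.of_forall fun y => ?_)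
  have hpos : 0 < c * (1 + |y|) := by positivity
  rw [norm_eq_abs, abs_of_nonneg (rpow_nonneg (hpos.le.trans (hle y)) _), norm_eq_abs,
    ← mul_rpow hc.le (by positivity)]
  exact rpow_le_rpow_of_nonpos hpos (hle y) (by linarith)

theorem hasDerivAt_integral_Iic {f : ℝ → ℝ} (hf : Integrable f) (hfc : Continuous f) (x : ℝ) :
    HasDerivAt (fun u => ∫ y in Iic u, f y) (f x) x := by
  have hsplit :
      (fun u => ∫ y in Iic u, f y) = fun u => (∫ y in Iic 0, f y) + ∫ y in 0..u, f y := by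
    funext u
    rw [← intervalIntegral.integral_Iic_sub_Iic hf.integrableOn hf.integrableOn]
    ring
  rw [hsplit]
  exact (intervalIntegral.integral_hasDerivAt_right hf.intervalIntegrable
    hfc.aestronglyMeasurable.stronglyMeasurableAtFilter hfc.continuousAt).const_add _

theorem iteratedDeriv_two_one_add_rpow (c y : ℝ) :
    iteratedDeriv 2 (fun t => (1 + t) ^ c) y = c * (c - 1) * (1 + y) ^ (c - 2) := by
  rw [iteratedDeriv_comp_const_add 2 (fun t => t ^ c), iteratedDeriv_eq_iterate]
  simp only [iter_deriv_rpow_const]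
  simp [descPochhammer_succ_right]

section

variable {ψ : ℝ → ℝ}

theorem half_mul_one_add_abs_le_one_add (hψ0 : ∀ y, 0 ≤ ψ y)
    (hψabs : ∀ y, 1 ≤ |y| → ψ y = |y|) (y : ℝ) : 2⁻¹ * (1 + |y|) ≤ 1 + ψ y := by
  rcases le_or_gt 1 |y| with hy | hy
  · rw [hψabs y hy]; linarith [abs_nonneg y]
  · linarith [hψ0 y]

theorem iteratedDeriv_two_one_add_rpow_of_one_lt_abs (hψabs : ∀ y, 1 ≤ |y| → ψ y = |y|)
    (c : ℝ) {y : ℝ} (hy : 1 < |y|) :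
    iteratedDeriv 2 (fun t => (1 + ψ t) ^ c) y = c * (c - 1) * (1 + |y|) ^ (c - 2) := by
  rcases lt_abs.1 hy with hy | hy
  · have hloc : (fun t => (1 + ψ t) ^ c) =ᶠ[𝓝 y] fun t => (1 + t) ^ c := by
      filter_upwards [Ioi_mem_nhds hy] with t (ht : 1 < t)
      rw [hψabs t (by rw [abs_of_pos (by linarith)]; exact ht.le), abs_of_pos (by linarith)]
    rw [hloc.iteratedDeriv_eq, iteratedDeriv_two_one_add_rpow, abs_of_pos (by linarith)]
  · have hloc : (fun t => (1 + ψ t) ^ c) =ᶠ[𝓝 y] fun t => (1 + -t) ^ c := by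
      filter_upwards [Iio_mem_nhds (show y < -1 by linarith)] with t (ht : t < -1)
      rw [hψabs t (by rw [abs_of_neg (by linarith)]; linarith), abs_of_neg (by linarith)]
    rw [hloc.iteratedDeriv_eq, iteratedDeriv_comp_neg 2 (fun t => (1 + t) ^ c),
      iteratedDeriv_two_one_add_rpow, abs_of_neg (by linarith)]
    simp

theorem exists_abs_iteratedDeriv_two_one_add_rpow_le (hψ : ContDiff ℝ 2 ψ)
    (hψ0 : ∀ y, 0 ≤ ψ y) (hψabs : ∀ y, 1 ≤ |y| → ψ y = |y|) (c : ℝ) :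
    ∃ K > 0, ∀ y, |iteratedDeriv 2 (fun t => (1 + ψ t) ^ c) y| ≤ K * (1 + ψ y) ^ c := by
  have hbase : ∀ y, 0 < 1 + ψ y := fun y => by linarith [hψ0 y]
  have hf : ContDiff ℝ 2 fun t => (1 + ψ t) ^ c :=
    (contDiff_const.add hψ).rpow_const_of_ne fun y => (hbase y).ne'
  obtain ⟨K, hK, hKle⟩ := (isCompact_Icc (a := -2) (b := 2)).exists_abs_le_mul_of_pos
    (hf.continuous_iteratedDeriv 2 le_rfl).continuousOn
    hf.continuous.continuousOn fun y _ => rpow_pos_of_pos (hbase y) c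
  refine ⟨max K |c * (c - 1)|, lt_max_of_lt_left hK, fun y => ?_⟩
  have hfpos := rpow_pos_of_pos (hbase y) c
  rcases le_or_gt |y| 2 with hy | hy
  · exact (hKle y (abs_le.1 hy)).trans
      (mul_le_mul_of_nonneg_right (le_max_left _ _) hfpos.le)
  · have hy1 : 1 < |y| := by linarith
    have hpow : (1 + |y|) ^ (c - 2) ≤ (1 + ψ y) ^ c := by
      rw [hψabs y hy1.le]
      exact rpow_le_rpow_of_exponent_le (by linarith [abs_nonneg y]) (by linarith)
    rw [iteratedDeriv_two_one_add_rpow_of_one_lt_abs hψabs c hy1, abs_mul,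
      abs_of_pos (rpow_pos_of_pos (by positivity) _)]
    exact mul_le_mul (le_max_right _ _) hpow (by positivity) (by positivity)

end

/-- There exists a constant `C > 0` such that for all `x, y ∈ ℝ`,
`|a''(x) − a''(y)| ≤ C |a(x) − a(y)|`, where `a(x) = ∫_{-∞}^x (1+ψ(y))^{-(1+ε)} dy`. -/
theorem stmt3 (ε : ℝ) (hε : 0 < ε) (ψ : ℝ → ℝ)
    (hψ : ContDiff ℝ 3 ψ) (hψ0 : ∀ y, 0 ≤ ψ y)
    (hψabs : ∀ y, 1 ≤ |y| → ψ y = |y|)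
    (a : ℝ → ℝ)
    (ha : ∀ x, a x = ∫ y in Set.Iic x, (1 + ψ y) ^ (-(1 + ε))) :
    ∃ C > 0, ∀ x y : ℝ,
      |iteratedDeriv 2 a x - iteratedDeriv 2 a y| ≤ C * |a x - a y| := by
  set f : ℝ → ℝ := fun y => (1 + ψ y) ^ (-(1 + ε))
  have hψ2 : ContDiff ℝ 2 ψ := hψ.of_le (by norm_num)
  have hf : ContDiff ℝ 2 f :=
    (contDiff_const.add hψ2).rpow_const_of_ne fun y => by linarith [hψ0 y]
  have hf_int : Integrable f :=
    integrable_rpow_neg_of_mul_one_add_abs_le (by linarith) (by norm_num)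
      (continuous_const.add hψ.continuous).measurable (half_mul_one_add_abs_le_one_add hψ0 hψabs)
  have ha' : ∀ x, HasDerivAt a (f x) x := by
    rw [funext ha]
    exact hasDerivAt_integral_Iic hf_int hf.continuous
  have hf' : ∀ x, HasDerivAt (deriv f) (iteratedDeriv 2 f x) x := fun x => by
    rw [iteratedDeriv_succ, iteratedDeriv_one]
    exact ((hf.iterate_deriv' 1 1).differentiable one_ne_zero x).hasDerivAt
  obtain ⟨K, hK, hKle⟩ := exists_abs_iteratedDeriv_two_one_add_rpow_le hψ2 hψ0 hψabs (-(1 + ε))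
  have ha'' : iteratedDeriv 2 a = deriv f := by
    rw [iteratedDeriv_succ, iteratedDeriv_one, funext fun x => (ha' x).deriv]
  refine ⟨K, hK, fun x y => ?_⟩
  rw [ha'']
  exact abs_sub_le_mul_abs_sub_of_abs_deriv_le hK.le hf' ha' hKle x y
end

section
/- Let f : ℝ → ℝ be continuously differentiable and suppose there is a constant C₀ > 0 with |f'(x)| ≤ C₀ (1+|x|)^{-(1+ε)} for all x ∈ ℝ. Then there exists a constant C > 0 such that for all x, y ∈ ℝ, |f(x) − f(y)| ≤ C |a(x) − a(y)|. -/
/-!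
Near infinity `1 + ψ` is comparable to `1 + |x|` (on `[-1, 1]` both are bounded above and
below), so `a'` is comparable to `(1 + |x|)^{-(1+ε)}`. Hence the hypothesis gives
`|f'| ≤ C a'`, and integrating between `y` and `x` yields `|f x - f y| ≤ C |a x - a y|`;
the integrability of `a'` on `(-∞, x]` comes from the same comparison.
-/

open MeasureTheory

lemma abs_sub_le_abs_integral_of_abs_deriv_le {f g : ℝ → ℝ} (hf : ContDiff ℝ 1 f)
    (hg : Continuous g) (hfg : ∀ z, |deriv f z| ≤ g z) (x y : ℝ) :
    |f x - f y| ≤ |∫ z in y..x, g z| := by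
  wlog hyx : y ≤ x generalizing x y
  · rw [abs_sub_comm, intervalIntegral.integral_symm, abs_neg]
    exact this y x (le_of_not_ge hyx)
  have hderiv_cont : Continuous (deriv f) := hf.continuous_deriv le_rfl
  calc |f x - f y| = |∫ z in y..x, deriv f z| := by
        rw [intervalIntegral.integral_deriv_eq_sub
          (fun z _ => (hf.differentiable one_ne_zero).differentiableAt)
          (hderiv_cont.intervalIntegrable _ _)]
    _ ≤ ∫ z in y..x, |deriv f z| := intervalIntegral.abs_integral_le_integral_abs hyx
    _ ≤ ∫ z in y..x, g z :=
        intervalIntegral.integral_mono_on hyx (hderiv_cont.abs.intervalIntegrable _ _)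
          (hg.intervalIntegrable _ _) fun z _ => hfg z
    _ ≤ |∫ z in y..x, g z| := le_abs_self _

lemma rpow_neg_le_mul_rpow_neg {u v K s : ℝ} (hu : 0 < u) (hK : 0 < K) (huv : u ≤ K * v)
    (hs : 0 ≤ s) : v ^ (-s) ≤ K ^ s * u ^ (-s) := by
  have hv : 0 ≤ v := nonneg_of_mul_nonneg_right (hu.le.trans huv) hK
  calc v ^ (-s) = K ^ s * (K * v) ^ (-s) := by
        rw [Real.mul_rpow hK.le hv, ← mul_assoc, ← Real.rpow_add hK, add_neg_cancel,
          Real.rpow_zero, one_mul]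
    _ ≤ K ^ s * u ^ (-s) := mul_le_mul_of_nonneg_left
        (Real.rpow_le_rpow_of_nonpos hu huv (neg_nonpos.2 hs)) (by positivity)

section AbsOutsideUnitInterval

variable {ψ : ℝ → ℝ} (hψabs : ∀ y, 1 ≤ |y| → ψ y = |y|)
include hψabs

lemma exists_one_add_le_mul_one_add_abs (hψ : Continuous ψ) :
    ∃ K > 0, ∀ y, 1 + ψ y ≤ K * (1 + |y|) := by
  obtain ⟨M, hM⟩ := (isCompact_Icc (a := (-1 : ℝ)) (b := 1)).bddAbove_image hψ.continuousOn
  refine ⟨1 + max M 0, by positivity, fun y => ?_⟩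
  have hM0 : 0 ≤ max M 0 := le_max_right M 0
  rcases le_or_gt 1 |y| with hy | hy
  · rw [hψabs y hy]
    nlinarith [abs_nonneg y]
  · have hψM : ψ y ≤ max M 0 :=
      (hM ⟨y, abs_le.1 hy.le, rfl⟩).trans (le_max_left M 0)
    nlinarith [abs_nonneg y]

lemma one_add_abs_le_two_mul_one_add (hψ0 : ∀ y, 0 ≤ ψ y) (y : ℝ) :
    1 + |y| ≤ 2 * (1 + ψ y) := by
  rcases le_or_gt 1 |y| with hy | hy
  · rw [hψabs y hy]
    linarith
  · linarith [hψ0 y]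

lemma integrable_one_add_rpow_neg {ε : ℝ} (hε : 0 < ε) (hψ : Continuous ψ)
    (hψ0 : ∀ y, 0 ≤ ψ y) : Integrable fun y => (1 + ψ y) ^ (-(1 + ε)) := by
  have hpos : ∀ y, 0 < 1 + ψ y := fun y => by linarith [hψ0 y]
  have hdom : Integrable fun y : ℝ => (1 + ‖y‖) ^ (-(1 + ε)) :=
    integrable_one_add_norm (by simp; linarith)
  refine (hdom.const_mul (2 ^ (1 + ε))).mono'
    ((hψ.const_add 1).rpow_const fun y => Or.inl (hpos y).ne').aestronglyMeasurable
    (Filter.Eventually.of_forall fun y => ?_)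
  rw [Real.norm_eq_abs, abs_of_pos (Real.rpow_pos_of_pos (hpos y) _), Real.norm_eq_abs]
  exact rpow_neg_le_mul_rpow_neg (by positivity) two_pos
    (one_add_abs_le_two_mul_one_add hψabs hψ0 y) (by linarith)

end AbsOutsideUnitInterval

/-- If `f` is `C¹` with `|f'(x)| ≤ C₀ (1+|x|)^{-(1+ε)}`, then there is `C > 0` such that
`|f(x) − f(y)| ≤ C |a(x) − a(y)|`, where `a(x) = ∫_{-∞}^x (1+ψ(y))^{-(1+ε)} dy`. -/
theorem stmt4 (ε : ℝ) (hε : 0 < ε) (ψ : ℝ → ℝ)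
    (hψ : ContDiff ℝ 3 ψ) (hψ0 : ∀ y, 0 ≤ ψ y)
    (hψabs : ∀ y, 1 ≤ |y| → ψ y = |y|)
    (a : ℝ → ℝ)
    (ha : ∀ x, a x = ∫ y in Set.Iic x, (1 + ψ y) ^ (-(1 + ε)))
    (f : ℝ → ℝ) (hf : ContDiff ℝ 1 f)
    (C₀ : ℝ) (hC₀ : 0 < C₀)
    (hf' : ∀ x, |deriv f x| ≤ C₀ * (1 + |x|) ^ (-(1 + ε))) :
    ∃ C > 0, ∀ x y : ℝ, |f x - f y| ≤ C * |a x - a y| := by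
  set w : ℝ → ℝ := fun y => (1 + ψ y) ^ (-(1 + ε))
  have hpos : ∀ y, 0 < 1 + ψ y := fun y => by linarith [hψ0 y]
  have hw_cont : Continuous w :=
    (hψ.continuous.const_add 1).rpow_const fun y => Or.inl (hpos y).ne'
  have hw_int : Integrable w := integrable_one_add_rpow_neg hψabs hε hψ.continuous hψ0
  obtain ⟨K, hK, hψK⟩ := exists_one_add_le_mul_one_add_abs hψabs hψ.continuous
  have hC : 0 < C₀ * K ^ (1 + ε) := by positivity
  have hf'w : ∀ z, |deriv f z| ≤ C₀ * K ^ (1 + ε) * w z := fun z => by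
    rw [mul_assoc]
    exact (hf' z).trans <| mul_le_mul_of_nonneg_left
      (rpow_neg_le_mul_rpow_neg (hpos z) hK (hψK z) (by linarith)) hC₀.le
  refine ⟨C₀ * K ^ (1 + ε), hC, fun x y => ?_⟩
  calc |f x - f y| ≤ |∫ z in y..x, C₀ * K ^ (1 + ε) * w z| :=
        abs_sub_le_abs_integral_of_abs_deriv_le hf (continuous_const.mul hw_cont) hf'w x y
    _ = C₀ * K ^ (1 + ε) * |a x - a y| := by
        rw [intervalIntegral.integral_const_mul, abs_mul, abs_of_pos hC, ha, ha,
          intervalIntegral.integral_Iic_sub_Iic hw_int.integrableOn hw_int.integrableOn]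
end
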